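/- Let Z be a tempered distribution on ℝ^n of order ≤ (a,b), i.e., |Z(ξ)| ≤ C·sup_{|α|≤a, |β|≤b} sup_x |x^β ∂^α ξ(x)| for all Schwartz ξ. Then the Fourier transform of Z (i.e., Z ∘ F) is a tempered distribution of order ≤ (b, a+n+1). -/

import Mathlib

open MeasureTheory

/-- Partial derivative in the `i`-th coordinate direction. -/
noncomputable def dirD {n : ℕ} (i : Fin n) (g : EuclideanSpace ℝ (Fin n) → ℂ) :
    EuclideanSpace ℝ (Fin n) → ℂ :=
  fun x => fderiv ℝ g x (EuclideanSpace.single i 1)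

/-- The multi-index derivative `∂^α`. -/
noncomputable def mulDiff {n : ℕ} (α : Fin n → ℕ) (g : EuclideanSpace ℝ (Fin n) → ℂ) :
    EuclideanSpace ℝ (Fin n) → ℂ :=
  (List.finRange n).foldr (fun i h => (dirD i)^[α i] h) g

/-- A tempered distribution `Z` on `ℝ^n` has order `≤ (a, b)` if
`|Z ξ| ≤ C · sup_{|α| ≤ a, |β| ≤ b} sup_x |x^β ∂^α ξ(x)|` for all Schwartz `ξ`. -/
def HasOrder {n : ℕ} (Z : (EuclideanSpace ℝ (Fin n) → ℂ) → ℂ) (a b : ℕ) : Prop :=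
  ∃ C > (0 : ℝ), ∀ ξ : SchwartzMap (EuclideanSpace ℝ (Fin n)) ℂ, ∀ M : ℝ,
    (∀ (α β : Fin n → ℕ) (x : EuclideanSpace ℝ (Fin n)),
      (∑ i, α i) ≤ a → (∑ i, β i) ≤ b →
      |∏ i, (x i) ^ (β i)| * ‖mulDiff α (⇑ξ) x‖ ≤ M) →
    ‖Z ξ‖ ≤ C * M

/-- The Fourier transform on `ℝ^n` with the standard character `e^{2πi⟨x,y⟩}`. -/
noncomputable def FourT {n : ℕ} (ξ : EuclideanSpace ℝ (Fin n) → ℂ)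
    (y : EuclideanSpace ℝ (Fin n)) : ℂ :=
  ∫ x, ξ x * Complex.exp (2 * Real.pi * Complex.I * ((inner ℝ y x : ℝ) : ℂ))

open scoped ContDiff FourierTransform SchwartzMap

/-!
`HasOrder` measures a Schwartz function by the coordinate seminorms `sup |x^β ∂^α ξ(x)|`.
Expanding `‖x‖^k ≤ (∑ |xᵢ|)^k` and a multilinear map in the standard basis shows that these are
equivalent, up to constants depending on `n`, to the seminorms `sup ‖x‖^k ‖D^m ξ(x)‖`. For the
latter, `‖w‖^q ‖D^k (𝓕 f)(w)‖` is bounded by integrals `∫ ‖v‖^p ‖D^m f(v)‖` with `p ≤ k`, `m ≤ q`,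
and each such integral by sup-seminorms with `n + 1` more powers of `‖v‖`, because
`(1 + ‖v‖)^(-(n+1))` is integrable on `ℝ^n`. Finally `FourT ξ` is `𝓕 ξ` composed with `x ↦ -x`,
which preserves these seminorms.
-/

section CoordinateDerivatives

variable {n : ℕ}

noncomputable def dirDList (l : List (Fin n)) (g : EuclideanSpace ℝ (Fin n) → ℂ) :
    EuclideanSpace ℝ (Fin n) → ℂ :=
  l.foldr dirD g

@[simp]
lemma dirDList_nil (g : EuclideanSpace ℝ (Fin n) → ℂ) : dirDList [] g = g := rfl

@[simp]
lemma dirDList_cons (i : Fin n) (l : List (Fin n)) (g : EuclideanSpace ℝ (Fin n) → ℂ) :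
    dirDList (i :: l) g = dirD i (dirDList l g) := rfl

lemma dirDList_append (l₁ l₂ : List (Fin n)) (g : EuclideanSpace ℝ (Fin n) → ℂ) :
    dirDList (l₁ ++ l₂) g = dirDList l₁ (dirDList l₂ g) :=
  List.foldr_append

lemma iterate_dirD (i : Fin n) (k : ℕ) (g : EuclideanSpace ℝ (Fin n) → ℂ) :
    (dirD i)^[k] g = dirDList (List.replicate k i) g := by
  induction k with
  | zero => rfl
  | succ k ih => rw [Function.iterate_succ_apply', ih, List.replicate_succ, dirDList_cons]

lemma ContDiff.dirD {g : EuclideanSpace ℝ (Fin n) → ℂ} (hg : ContDiff ℝ ∞ g) (i : Fin n) :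
    ContDiff ℝ ∞ (dirD i g) :=
  (hg.fderiv_right (m := ∞) le_rfl).clm_apply contDiff_const

lemma ContDiff.dirDList {g : EuclideanSpace ℝ (Fin n) → ℂ} (hg : ContDiff ℝ ∞ g)
    (l : List (Fin n)) : ContDiff ℝ ∞ (dirDList l g) := by
  induction l with
  | nil => exact hg
  | cons i l ih => exact ih.dirD i

lemma dirD_dirD_eq_fderiv_fderiv {g : EuclideanSpace ℝ (Fin n) → ℂ} (hg : ContDiff ℝ ∞ g)
    (i j : Fin n) (x : EuclideanSpace ℝ (Fin n)) :
    dirD i (dirD j g) x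
      = fderiv ℝ (fderiv ℝ g) x (EuclideanSpace.single i 1) (EuclideanSpace.single j 1) := by
  change fderiv ℝ (fun y => fderiv ℝ g y (EuclideanSpace.single j 1)) x _ = _
  rw [fderiv_clm_apply ((hg.fderiv_right (m := ∞) le_rfl).differentiable (by simp) x)
    (differentiableAt_const _)]
  simp

lemma dirD_comm {g : EuclideanSpace ℝ (Fin n) → ℂ} (hg : ContDiff ℝ ∞ g) (i j : Fin n) :
    dirD i (dirD j g) = dirD j (dirD i g) := by
  funext x
  rw [dirD_dirD_eq_fderiv_fderiv hg, dirD_dirD_eq_fderiv_fderiv hg]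
  have h_smooth : minSmoothness ℝ 2 ≤ ∞ := by
    rw [minSmoothness_of_isRCLikeNormedField]
    exact WithTop.coe_le_coe.2 le_top
  exact (hg.contDiffAt.isSymmSndFDerivAt h_smooth).eq _ _

lemma dirDList_perm {l l' : List (Fin n)} (h : l.Perm l') {g : EuclideanSpace ℝ (Fin n) → ℂ}
    (hg : ContDiff ℝ ∞ g) : dirDList l g = dirDList l' g := by
  induction h with
  | nil => rfl
  | cons i _ ih => rw [dirDList_cons, dirDList_cons, ih]
  | swap i j l => exact dirD_comm (hg.dirDList l) j i
  | trans _ _ ih₁ ih₂ => rw [ih₁, ih₂]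

lemma dirDList_ofFn {m : ℕ} (r : Fin m → Fin n) {g : EuclideanSpace ℝ (Fin n) → ℂ}
    (hg : ContDiff ℝ ∞ g) (x : EuclideanSpace ℝ (Fin n)) :
    dirDList (List.ofFn r) g x
      = iteratedFDeriv ℝ m g x (fun j => EuclideanSpace.single (r j) 1) := by
  induction m generalizing x with
  | zero => simp
  | succ m ih =>
    calc dirDList (List.ofFn r) g x
        = fderiv ℝ (fun y => iteratedFDeriv ℝ m g y
            (fun j => EuclideanSpace.single (r j.succ) 1)) x (EuclideanSpace.single (r 0) 1) := by
          rw [List.ofFn_succ, dirDList_cons, dirD, funext (ih _)]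
      _ = fderiv ℝ (iteratedFDeriv ℝ m g) x (EuclideanSpace.single (r 0) 1)
            (fun j => EuclideanSpace.single (r j.succ) 1) :=
          fderiv_continuousMultilinear_apply_const_apply
            (hg.differentiable_iteratedFDeriv (by exact_mod_cast WithTop.coe_lt_top _) x) _ _
      _ = _ := rfl

end CoordinateDerivatives

section MultiIndex

variable {n : ℕ}

def multiIndexOf {m : ℕ} (r : Fin m → Fin n) : Fin n → ℕ :=
  fun i => (Finset.univ.filter (r · = i)).card

lemma sum_multiIndexOf {m : ℕ} (r : Fin m → Fin n) : ∑ i, multiIndexOf r i = m := by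
  simp only [multiIndexOf]
  rw [← Finset.card_eq_sum_card_fiberwise (fun j _ => Finset.mem_univ (r j)), Finset.card_univ,
    Fintype.card_fin]

lemma prod_pow_multiIndexOf {M : Type*} [CommMonoid M] {m : ℕ} (r : Fin m → Fin n)
    (f : Fin n → M) : ∏ i, f i ^ multiIndexOf r i = ∏ j, f (r j) := by
  rw [← Finset.prod_fiberwise Finset.univ r (fun j => f (r j))]
  refine Finset.prod_congr rfl fun i _ => ?_
  rw [Finset.prod_congr rfl fun j hj => congrArg f (Finset.mem_filter.1 hj).2, Finset.prod_const]
  rfl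

lemma count_ofFn_eq_multiIndexOf {m : ℕ} (r : Fin m → Fin n) (i : Fin n) :
    (List.ofFn r).count i = multiIndexOf r i := by
  rw [← Multiset.coe_count, ← Fin.univ_val_map, Multiset.count_map, multiIndexOf, Finset.card_def,
    Finset.filter_val]
  simp [eq_comm]

end MultiIndex

section MulDiff

variable {n : ℕ}

lemma mulDiff_eq_dirDList (α : Fin n → ℕ) (g : EuclideanSpace ℝ (Fin n) → ℂ) :
    mulDiff α g = dirDList ((List.finRange n).flatMap fun i => List.replicate (α i) i) g := by
  unfold mulDiff
  induction List.finRange n with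
  | nil => rfl
  | cons i L ih =>
    rw [List.foldr_cons, ih, iterate_dirD, List.flatMap_cons, dirDList_append]

lemma count_flatMap_replicate (α : Fin n → ℕ) (i : Fin n) :
    ((List.finRange n).flatMap fun j => List.replicate (α j) j).count i = α i := by
  simp [List.count_flatMap, List.count_replicate, ← Fin.sum_univ_def]

lemma mulDiff_eq_dirDList_of_count {α : Fin n → ℕ} {l : List (Fin n)}
    (hl : ∀ i, l.count i = α i) {g : EuclideanSpace ℝ (Fin n) → ℂ} (hg : ContDiff ℝ ∞ g) :
    mulDiff α g = dirDList l g :=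
  (mulDiff_eq_dirDList α g).trans <| dirDList_perm
    (List.perm_iff_count.2 fun i => by rw [count_flatMap_replicate, hl]) hg

lemma norm_mulDiff_le (α : Fin n → ℕ) {g : EuclideanSpace ℝ (Fin n) → ℂ} (hg : ContDiff ℝ ∞ g)
    (x : EuclideanSpace ℝ (Fin n)) :
    ‖mulDiff α g x‖ ≤ ‖iteratedFDeriv ℝ (∑ i, α i) g x‖ := by
  rw [mulDiff_eq_dirDList]
  set l := (List.finRange n).flatMap fun i => List.replicate (α i) i
  have hlen : l.length = ∑ i, α i := by simp [l, ← Fin.sum_univ_def]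
  rw [← List.ofFn_get l, dirDList_ofFn _ hg, ← hlen]
  calc _ ≤ ‖iteratedFDeriv ℝ l.length g x‖ * ∏ j, ‖EuclideanSpace.single (l.get j) (1 : ℝ)‖ :=
        ContinuousMultilinearMap.le_opNorm _ _
    _ = _ := by simp

lemma iteratedFDeriv_single_eq_mulDiff {m : ℕ} (r : Fin m → Fin n)
    {g : EuclideanSpace ℝ (Fin n) → ℂ} (hg : ContDiff ℝ ∞ g) (x : EuclideanSpace ℝ (Fin n)) :
    iteratedFDeriv ℝ m g x (fun j => EuclideanSpace.single (r j) 1)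
      = mulDiff (multiIndexOf r) g x := by
  rw [mulDiff_eq_dirDList_of_count (count_ofFn_eq_multiIndexOf r) hg, dirDList_ofFn r hg]

end MulDiff

section Coordinates

variable {n : ℕ}

lemma EuclideanSpace.sum_apply_smul_single (x : EuclideanSpace ℝ (Fin n)) :
    ∑ i, x i • EuclideanSpace.single i (1 : ℝ) = x := by
  simpa using (EuclideanSpace.basisFun (Fin n) ℝ).sum_repr x

lemma EuclideanSpace.abs_apply_le_norm (x : EuclideanSpace ℝ (Fin n)) (i : Fin n) :
    |x i| ≤ ‖x‖ :=
  PiLp.norm_apply_le x i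

lemma EuclideanSpace.norm_le_sum_abs (x : EuclideanSpace ℝ (Fin n)) : ‖x‖ ≤ ∑ i, |x i| := by
  conv_lhs => rw [← x.sum_apply_smul_single]
  exact (norm_sum_le _ _).trans_eq (by simp [norm_smul])

lemma abs_prod_pow_le_norm_pow (x : EuclideanSpace ℝ (Fin n)) (β : Fin n → ℕ) :
    |∏ i, x i ^ β i| ≤ ‖x‖ ^ ∑ i, β i := by
  rw [Finset.abs_prod, ← Finset.prod_pow_eq_pow_sum]
  gcongr with i
  rw [abs_pow]
  gcongr
  exact x.abs_apply_le_norm i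

lemma norm_pow_le_sum_abs_prod_pow_multiIndexOf (x : EuclideanSpace ℝ (Fin n)) (k : ℕ) :
    ‖x‖ ^ k ≤ ∑ r : Fin k → Fin n, |∏ i, x i ^ multiIndexOf r i| := by
  calc ‖x‖ ^ k ≤ (∑ i, |x i|) ^ k := by gcongr; exact x.norm_le_sum_abs
    _ = ∑ r : Fin k → Fin n, ∏ j, |x (r j)| := Fintype.sum_pow _ k
    _ = _ := by simp only [prod_pow_multiIndexOf, Finset.abs_prod]

lemma ContinuousMultilinearMap.norm_le_sum_single {F : Type*} [NormedAddCommGroup F]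
    [NormedSpace ℝ F] {m : ℕ}
    (T : ContinuousMultilinearMap ℝ (fun _ : Fin m => EuclideanSpace ℝ (Fin n)) F) :
    ‖T‖ ≤ ∑ r : Fin m → Fin n, ‖T (fun j => EuclideanSpace.single (r j) 1)‖ := by
  refine T.opNorm_le_bound (by positivity) fun v => ?_
  have hv : T v = ∑ r : Fin m → Fin n,
      (∏ j, v j (r j)) • T (fun j => EuclideanSpace.single (r j) 1) := by
    conv_lhs => rw [show v = fun j => ∑ i, v j i • EuclideanSpace.single i (1 : ℝ) from
      funext fun j => (v j).sum_apply_smul_single.symm]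
    simp only [T.map_sum, T.map_smul_univ]
  rw [hv, Finset.sum_mul]
  refine (norm_sum_le _ _).trans (Finset.sum_le_sum fun r _ => ?_)
  rw [norm_smul, mul_comm, Real.norm_eq_abs, Finset.abs_prod]
  gcongr with j
  exact (v j).abs_apply_le_norm (r j)

end Coordinates

/-- `HasOrder Z a b` unfolds to `∃ C > 0, ∀ ξ M, MonomialDerivBound ξ a b M → ‖Z ξ‖ ≤ C * M`. -/
def MonomialDerivBound {n : ℕ} (g : EuclideanSpace ℝ (Fin n) → ℂ) (a b : ℕ) (M : ℝ) : Prop :=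
  ∀ (α β : Fin n → ℕ) (x : EuclideanSpace ℝ (Fin n)), (∑ i, α i) ≤ a → (∑ i, β i) ≤ b →
    |∏ i, (x i) ^ (β i)| * ‖mulDiff α g x‖ ≤ M

def NormDerivBound {V F : Type*} [NormedAddCommGroup V] [NormedSpace ℝ V] [NormedAddCommGroup F]
    [NormedSpace ℝ F] (f : V → F) (a b : ℕ) (M : ℝ) : Prop :=
  ∀ m ≤ a, ∀ k ≤ b, ∀ x, ‖x‖ ^ k * ‖iteratedFDeriv ℝ m f x‖ ≤ M

section NormDerivBound

variable {V F : Type*} [NormedAddCommGroup V] [NormedSpace ℝ V] [NormedAddCommGroup F]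
  [NormedSpace ℝ F] {f : V → F} {a b : ℕ} {M : ℝ}

lemma NormDerivBound.nonneg (h : NormDerivBound f a b M) : 0 ≤ M :=
  le_trans (by positivity) (h 0 (Nat.zero_le a) 0 (Nat.zero_le b) 0)

lemma NormDerivBound.comp_neg (h : NormDerivBound f a b M) :
    NormDerivBound (fun x => f (-x)) a b M := by
  intro m hm k hk x
  have h_neg := (LinearIsometryEquiv.neg ℝ (E := V)).norm_iteratedFDeriv_comp_right f x m
  simp only [Function.comp_def, LinearIsometryEquiv.coe_neg] at h_neg
  simpa [h_neg] using h m hm k hk (-x)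

end NormDerivBound

section Euclidean

variable {n : ℕ} {g : EuclideanSpace ℝ (Fin n) → ℂ} {a b : ℕ} {M : ℝ}

lemma MonomialDerivBound.nonneg (h : MonomialDerivBound g a b M) : 0 ≤ M :=
  le_trans (by positivity) (h 0 0 0 (by simp) (by simp))

lemma MonomialDerivBound.normDerivBound (hg : ContDiff ℝ ∞ g) (h : MonomialDerivBound g a b M) :
    NormDerivBound g a b ((n + 1) ^ (a + b) * M) := by
  intro m hm k hk x
  have h_monomial (r : Fin k → Fin n) (s : Fin m → Fin n) :
      |∏ i, x i ^ multiIndexOf r i| * ‖mulDiff (multiIndexOf s) g x‖ ≤ M :=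
    h _ _ x (by rwa [sum_multiIndexOf]) (by rwa [sum_multiIndexOf])
  have h_deriv : ‖iteratedFDeriv ℝ m g x‖ ≤ ∑ s : Fin m → Fin n, ‖mulDiff (multiIndexOf s) g x‖ :=
    (iteratedFDeriv ℝ m g x).norm_le_sum_single.trans_eq <| by
      simp only [iteratedFDeriv_single_eq_mulDiff _ hg]
  calc ‖x‖ ^ k * ‖iteratedFDeriv ℝ m g x‖
      ≤ (∑ r : Fin k → Fin n, |∏ i, x i ^ multiIndexOf r i|) *
          ∑ s : Fin m → Fin n, ‖mulDiff (multiIndexOf s) g x‖ :=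
        mul_le_mul (norm_pow_le_sum_abs_prod_pow_multiIndexOf x k) h_deriv (by positivity)
          (by positivity)
    _ ≤ ∑ _r : Fin k → Fin n, ∑ _s : Fin m → Fin n, M := by
        rw [Finset.sum_mul_sum]
        gcongr with r _ s _
        exact h_monomial r s
    _ = n ^ (k + m) * M := by
        simp only [Finset.sum_const, Finset.card_univ, Fintype.card_pi, Fintype.card_fin,
          Finset.prod_const, nsmul_eq_mul, Nat.cast_pow, pow_add]
        ring
    _ ≤ (n + 1) ^ (a + b) * M := by
        gcongr
        · exact h.nonneg
        · calc (n : ℝ) ^ (k + m) ≤ (n + 1) ^ (k + m) := by gcongr; linarith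
            _ ≤ (n + 1) ^ (a + b) := pow_le_pow_right₀ (by linarith) (by omega)

lemma NormDerivBound.monomialDerivBound (hg : ContDiff ℝ ∞ g) (h : NormDerivBound g a b M) :
    MonomialDerivBound g a b M := fun α β x hα hβ =>
  calc |∏ i, x i ^ β i| * ‖mulDiff α g x‖
      ≤ ‖x‖ ^ (∑ i, β i) * ‖iteratedFDeriv ℝ (∑ i, α i) g x‖ :=
        mul_le_mul (abs_prod_pow_le_norm_pow x β) (norm_mulDiff_le α hg x) (norm_nonneg _)
          (by positivity)
    _ ≤ M := h _ hα _ hβ x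

end Euclidean

lemma integral_pow_mul_le_of_integrable_one_add_norm {V F : Type*} [NormedAddCommGroup V]
    [MeasurableSpace V] [NormedAddCommGroup F] {μ : Measure V} {l k : ℕ}
    (hl : Integrable (fun x : V => (1 + ‖x‖) ^ (-(l : ℝ))) μ) {f : V → F} {C₁ C₂ : ℝ}
    (hf : ∀ x, ‖f x‖ ≤ C₁) (h'f : ∀ x, ‖x‖ ^ (k + l) * ‖f x‖ ≤ C₂) :
    ∫ x, ‖x‖ ^ k * ‖f x‖ ∂μ ≤ 2 ^ l * (∫ x, (1 + ‖x‖) ^ (-(l : ℝ)) ∂μ) * (C₁ + C₂) := by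
  rw [← integral_const_mul, ← integral_mul_const]
  refine integral_mono_of_nonneg (.of_forall fun x => by positivity)
    ((hl.const_mul _).mul_const _) (.of_forall fun x => ?_)
  exact (pow_mul_le_of_le_of_pow_mul_le (norm_nonneg _) (norm_nonneg _) (hf x) (h'f x)).trans_eq
    (by ring)

section Fourier

variable {V E : Type*} [NormedAddCommGroup V] [InnerProductSpace ℝ V] [FiniteDimensional ℝ V]
  [MeasurableSpace V] [BorelSpace V] [NormedAddCommGroup E] [NormedSpace ℂ E]

lemma integrable_one_add_norm_rpow_neg_finrank_add_one :
    Integrable (fun x : V => (1 + ‖x‖) ^ (-((Module.finrank ℝ V + 1 : ℕ) : ℝ))) :=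
  integrable_one_add_norm (by push_cast; linarith)

lemma integral_one_add_norm_rpow_neg_finrank_add_one_pos :
    0 < ∫ x : V, (1 + ‖x‖) ^ (-((Module.finrank ℝ V + 1 : ℕ) : ℝ)) := by
  refine (integral_pos_iff_support_of_nonneg (fun x => by positivity)
    integrable_one_add_norm_rpow_neg_finrank_add_one).2 ?_
  rw [Function.support_eq_univ fun x => (Real.rpow_pos_of_pos (by positivity) _).ne']
  exact Measure.measure_univ_pos.2 (NeZero.ne _)

noncomputable def fourierBoundConst (V : Type*) [NormedAddCommGroup V] [InnerProductSpace ℝ V]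
    [FiniteDimensional ℝ V] [MeasurableSpace V] [BorelSpace V] (a b : ℕ) : ℝ :=
  (2 * Real.pi) ^ a * (2 * a + 2) ^ b * ((a + 1) * (b + 1)) * 2 ^ (Module.finrank ℝ V + 1) *
    (∫ x : V, (1 + ‖x‖) ^ (-((Module.finrank ℝ V + 1 : ℕ) : ℝ))) * 2

lemma fourierBoundConst_pos (a b : ℕ) : 0 < fourierBoundConst V a b := by
  have := integral_one_add_norm_rpow_neg_finrank_add_one_pos (V := V)
  unfold fourierBoundConst
  positivity

variable {a b : ℕ} {M : ℝ}

lemma NormDerivBound.integral_le {f : V → E}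
    (hf : NormDerivBound f b (a + Module.finrank ℝ V + 1) M) {k m : ℕ} (hk : k ≤ a) (hm : m ≤ b) :
    ∫ x, ‖x‖ ^ k * ‖iteratedFDeriv ℝ m f x‖ ≤ 2 ^ (Module.finrank ℝ V + 1) *
      (∫ x : V, (1 + ‖x‖) ^ (-((Module.finrank ℝ V + 1 : ℕ) : ℝ))) * (M + M) :=
  integral_pow_mul_le_of_integrable_one_add_norm integrable_one_add_norm_rpow_neg_finrank_add_one
    (fun x => by simpa using hf m hm 0 (Nat.zero_le _) x) (fun x => hf m hm _ (by omega) x)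

lemma NormDerivBound.fourier {f : 𝓢(V, E)}
    (hf : NormDerivBound f b (a + Module.finrank ℝ V + 1) M) :
    NormDerivBound (𝓕 (f : V → E)) a b (fourierBoundConst V a b * M) := by
  intro k hk q hq w
  set I := 2 ^ (Module.finrank ℝ V + 1) *
      (∫ x : V, (1 + ‖x‖) ^ (-((Module.finrank ℝ V + 1 : ℕ) : ℝ))) * (M + M)
  have hI : 0 ≤ I := by
    have := integral_one_add_norm_rpow_neg_finrank_add_one_pos (V := V)
    have := hf.nonneg
    positivity
  calc ‖w‖ ^ q * ‖iteratedFDeriv ℝ k (𝓕 (f : V → E)) w‖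
      ≤ (2 * Real.pi) ^ k * (2 * k + 2) ^ q *
          ∑ p ∈ Finset.range (k + 1) ×ˢ Finset.range (q + 1),
            ∫ v, ‖v‖ ^ p.1 * ‖iteratedFDeriv ℝ p.2 f v‖ :=
        Real.pow_mul_norm_iteratedFDeriv_fourier_le (f.smooth ⊤)
          (fun _ _ _ _ => f.integrable_pow_mul_iteratedFDeriv _ _ _) le_top le_top w
    _ ≤ (2 * Real.pi) ^ k * (2 * k + 2) ^ q *
          ∑ _p ∈ Finset.range (k + 1) ×ˢ Finset.range (q + 1), I := by
        gcongr with p hp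
        simp only [Finset.mem_product, Finset.mem_range] at hp
        exact hf.integral_le (by omega) (by omega)
    _ = (2 * Real.pi) ^ k * (2 * k + 2) ^ q * ((k + 1) * (q + 1)) * I := by
        simp [mul_assoc]
    _ ≤ (2 * Real.pi) ^ a * (2 * a + 2) ^ b * ((a + 1) * (b + 1)) * I := by
        have h2π : 1 ≤ 2 * Real.pi := by linarith [Real.pi_gt_three]
        gcongr
        calc (2 * (k : ℝ) + 2) ^ q ≤ (2 * a + 2) ^ q := by gcongr
          _ ≤ (2 * a + 2) ^ b := pow_le_pow_right₀ (by linarith) hq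
    _ = fourierBoundConst V a b * M := by
        unfold fourierBoundConst I
        ring

end Fourier

section FourT

variable {n : ℕ}

lemma FourT_eq_fourierInv (ξ : EuclideanSpace ℝ (Fin n) → ℂ) : FourT ξ = 𝓕⁻ ξ := by
  funext y
  rw [Real.fourierInv_eq', FourT]
  congr 1
  funext v
  rw [smul_eq_mul, mul_comm, real_inner_comm]
  push_cast
  ring_nf

lemma MonomialDerivBound.fourierInv {ξ : 𝓢(EuclideanSpace ℝ (Fin n), ℂ)} {a b : ℕ} {M : ℝ}
    (h : MonomialDerivBound ξ b (a + n + 1) M) :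
    MonomialDerivBound (𝓕⁻ ξ : 𝓢(EuclideanSpace ℝ (Fin n), ℂ)) a b
      (fourierBoundConst (EuclideanSpace ℝ (Fin n)) a b * ((n + 1) ^ (b + (a + n + 1)) * M)) := by
  have h_norm : NormDerivBound ξ b (a + Module.finrank ℝ (EuclideanSpace ℝ (Fin n)) + 1)
      ((n + 1) ^ (b + (a + n + 1)) * M) := by
    rw [finrank_euclideanSpace_fin]
    exact h.normDerivBound (ξ.smooth ⊤)
  have h_fourierInv : ⇑(𝓕⁻ ξ : 𝓢(EuclideanSpace ℝ (Fin n), ℂ))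
      = fun y => 𝓕 (ξ : EuclideanSpace ℝ (Fin n) → ℂ) (-y) := by
    funext y
    rw [SchwartzMap.fourierInv_coe, Real.fourierInv_eq_fourier_neg]
  refine NormDerivBound.monomialDerivBound ((𝓕⁻ ξ).smooth ⊤) ?_
  rw [h_fourierInv]
  exact h_norm.fourier.comp_neg

end FourT

/-- If a tempered distribution `Z` on `ℝ^n` has order `≤ (a,b)`, then its Fourier transform
`Z ∘ F` has order `≤ (b, a + n + 1)`. -/
theorem stmt7 {n : ℕ} (Z : (EuclideanSpace ℝ (Fin n) → ℂ) → ℂ) (a b : ℕ)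
    (hZ : HasOrder Z a b) :
    HasOrder (fun ξ => Z (FourT ξ)) b (a + n + 1) := by
  obtain ⟨C, hC, hZ⟩ := hZ
  have hK := fourierBoundConst_pos (V := EuclideanSpace ℝ (Fin n)) a b
  refine ⟨C * (fourierBoundConst _ a b * (n + 1) ^ (b + (a + n + 1))), by positivity,
    fun ξ M hM => ?_⟩
  change ‖Z (FourT ξ)‖ ≤ _
  rw [FourT_eq_fourierInv, ← SchwartzMap.fourierInv_coe]
  simpa only [mul_assoc] using hZ _ _ (MonomialDerivBound.fourierInv hM)
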